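/- arXiv:1304.5615 — 2 statements merged into one kernel-verified Lean document; each statement's English description precedes it below -/
import Mathlib

section
/- For all integers n ≥ 1 and all p with 1 ≤ p ≤ n, the Stirling number of the second kind satisfies p^n/p! − (p−1)^n/(p−1)! ≤ S(n,p) ≤ p^n/p!. -/
open Filter

namespace CatalanSat

/-- A logical connective: `and` or `or`. -/
inductive Conn : Type
  | and : Conn
  | or : Conn

/-- An and/or tree: a binary plane tree with internal nodes labelled by a
connective and leaves labelled by a literal `(v, b)`: variable `v`, positive
if `b = true`, negated if `b = false`. -/
inductive AOTree : Type
  | leaf (v : ℕ) (b : Bool) : AOTree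
  | node (c : Conn) (l r : AOTree) : AOTree

namespace AOTree

/-- The list of leaf labels (variable index, polarity), from left to right. -/
def leaves : AOTree → List (ℕ × Bool)
  | .leaf v b => [(v, b)]
  | .node _ l r => leaves l ++ leaves r

/-- The size of an and/or tree is its number of leaves. -/
def size (t : AOTree) : ℕ := t.leaves.length

/-- The number of distinct variables appearing as leaf labels. -/
def varCount (t : AOTree) : ℕ := (t.leaves.map Prod.fst).toFinset.card

/-- The Boolean function computed by an and/or tree. -/
def eval : AOTree → (ℕ → Bool) → Bool
  | .leaf v b, x => if b then x v else !(x v)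
  | .node .and l r, x => eval l x && eval r x
  | .node .or l r, x => eval l x || eval r x

end AOTree

/-- A tree-structure: a binary plane tree with internal nodes labelled by a
connective and unlabelled leaves. -/
inductive Shape : Type
  | leaf : Shape
  | node (c : Conn) (l r : Shape) : Shape

/-- The size of a tree-structure is its number of leaves. -/
def Shape.size : Shape → ℕ
  | .leaf => 1
  | .node _ l r => Shape.size l + Shape.size r

/-- The tree-structure of an and/or tree (forget the leaf labels). -/
def AOTree.shape : AOTree → Shape
  | .leaf _ _ => .leaf
  | .node c l r => .node c l.shape r.shape

/-- The label of the `i`-th leaf (junk default when out of range). -/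
def lv (t : AOTree) (i : ℕ) : ℕ × Bool := t.leaves.getD i (0, true)

/-- Two and/or trees are equivalent when they have the same tree-structure,
two leaves are labelled by the same variable in one iff they are in the other,
and two leaves are labelled by the same literal in one iff they are in the other. -/
def TreeEquiv (A B : AOTree) : Prop :=
  A.shape = B.shape ∧
  ∀ i j : ℕ, i < A.leaves.length → j < A.leaves.length →
    (((lv A i).1 = (lv A j).1) ↔ ((lv B i).1 = (lv B j).1)) ∧
    ((lv A i = lv A j) ↔ (lv B i = lv B j))

/-- The equivalence relation on Boolean functions induced by equivalence of trees. -/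
def FunEquiv (f g : (ℕ → Bool) → Bool) : Prop :=
  ∃ A B : AOTree, TreeEquiv A B ∧ A.eval = f ∧ B.eval = g

/-- The number of equivalence classes of and/or trees satisfying a property
(the property being assumed invariant under equivalence). -/
noncomputable def classCount (P : AOTree → Prop) : ℕ :=
  Nat.card (Quot (fun A B : {t : AOTree // P t} => TreeEquiv A.1 B.1))

/-- `Tcount n K`: number of equivalence classes of and/or trees of size `n`
using at most `K` distinct variables. -/
noncomputable def Tcount (n K : ℕ) : ℕ := classCount fun t => t.size = n ∧ t.varCount ≤ K

/-- Number of such classes computing a function of the class `⟨f⟩`. -/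
noncomputable def TcountClass (n K : ℕ) (f : (ℕ → Bool) → Bool) : ℕ :=
  classCount fun t => t.size = n ∧ t.varCount ≤ K ∧ FunEquiv t.eval f

/-- `P_n⟨f⟩`: the probability that a uniform equivalence class of trees of size
`n` (at most `K` variables) computes a function of `⟨f⟩`. -/
noncomputable def Pclass (n K : ℕ) (f : (ℕ → Bool) → Bool) : ℝ :=
  (TcountClass n K f : ℝ) / (Tcount n K : ℝ)

/-- Number of classes of size `n`, at most `K` variables, computing exactly `f`. -/
noncomputable def TcountEval (n K : ℕ) (f : (ℕ → Bool) → Bool) : ℕ :=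
  classCount fun t => t.size = n ∧ t.varCount ≤ K ∧ t.eval = f

/-- Stirling numbers of the second kind. -/
def stirling : ℕ → ℕ → ℕ
  | 0, 0 => 1
  | 0, _ + 1 => 0
  | _ + 1, 0 => 0
  | n + 1, k + 1 => (k + 1) * stirling n (k + 1) + stirling n k

/-- `B n k = Σ_{p=1}^{k} S(n,p)·2^{−p}`. -/
noncomputable def B (n k : ℕ) : ℝ :=
  ∑ p ∈ Finset.Icc 1 k, (stirling n p : ℝ) / 2 ^ p

/-- `a n p = p^n/(p!·2^p)`. -/
noncomputable def a (n p : ℕ) : ℝ :=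
  (p : ℝ) ^ n / ((Nat.factorial p : ℝ) * 2 ^ p)

/-- `rat_n = B_{n−1,k_n}/B_{n,k_n}`. -/
noncomputable def rat (k : ℕ → ℕ) (n : ℕ) : ℝ := B (n - 1) (k n) / B n (k n)

/-- The complexity `L(f)`: minimal size of an and/or tree computing `f`. -/
noncomputable def complexity (f : (ℕ → Bool) → Bool) : ℕ :=
  sInf {m | ∃ t : AOTree, t.size = m ∧ t.eval = f}

/-- The variable `x_i` is essential for `f`. -/
def Essential (i : ℕ) (f : (ℕ → Bool) → Bool) : Prop :=
  ∃ x : ℕ → Bool, f (Function.update x i false) ≠ f (Function.update x i true)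

/-- `E(f)`: the number of essential variables of `f`. -/
noncomputable def essCount (f : (ℕ → Bool) → Bool) : ℕ :=
  Nat.card {i : ℕ // Essential i f}

/-- The multiplicity `R⟨f⟩ = L⟨f⟩ − E⟨f⟩`. -/
noncomputable def mult (f : (ℕ → Bool) → Bool) : ℕ := complexity f - essCount f

/-- `M` is, for each `n ≥ 1`, an index of `{1,…,n}` maximizing `p ↦ p^n/(p!·2^p)`. -/
def IsArgmax (M : ℕ → ℕ) : Prop :=
  ∀ n, 1 ≤ n → M n ∈ Finset.Icc 1 n ∧ ∀ p ∈ Finset.Icc 1 n, a n p ≤ a n (M n)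

/-- There is a leaf labelled by the given literal linked to the root by
`∨`-labelled internal nodes only. -/
def orLeaf : AOTree → ℕ × Bool → Prop
  | .leaf v b, l => (v, b) = l
  | .node .or A B, l => orLeaf A l ∨ orLeaf B l
  | .node .and _ _, _ => False

/-- There is a leaf labelled by the given literal linked to the root by
`∧`-labelled internal nodes only. -/
def andLeaf : AOTree → ℕ × Bool → Prop
  | .leaf v b, l => (v, b) = l
  | .node .and A B, l => andLeaf A l ∨ andLeaf B l
  | .node .or _ _, _ => False

/-- A simple tautology: two leaves labelled by a variable and its negation,
both linked to the root through `∨`-connectives only. -/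
def IsSimpleTautology (t : AOTree) : Prop :=
  ∃ v b, orLeaf t (v, b) ∧ orLeaf t (v, !b)

/-- A simple contradiction: the dual notion. -/
def IsSimpleContradiction (t : AOTree) : Prop :=
  ∃ v b, andLeaf t (v, b) ∧ andLeaf t (v, !b)

/-- A tautology: a tree computing the constant function `true`. -/
def IsTautology (t : AOTree) : Prop := ∀ x : ℕ → Bool, t.eval x = true

/-- A simple-x of type T: one subtree of the root is a single leaf, the other
is a simple tautology if the root is `∧`, a simple contradiction if it is `∨`. -/
def IsSimpleXT (t : AOTree) : Prop :=
  (∃ v b s, (t = .node .and (.leaf v b) s ∨ t = .node .and s (.leaf v b)) ∧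
    IsSimpleTautology s) ∨
  (∃ v b s, (t = .node .or (.leaf v b) s ∨ t = .node .or s (.leaf v b)) ∧
    IsSimpleContradiction s)

/-- A simple-x of type X: one subtree of the root is a single leaf `ℓ`, the root
is `∧` (resp. `∨`), and the other subtree has a leaf labelled by the literal of
`ℓ` linked to its root by `∨`-only (resp. `∧`-only) internal nodes. -/
def IsSimpleXX (t : AOTree) : Prop :=
  (∃ v b s, (t = .node .and (.leaf v b) s ∨ t = .node .and s (.leaf v b)) ∧
    orLeaf s (v, b)) ∨
  (∃ v b s, (t = .node .or (.leaf v b) s ∨ t = .node .or s (.leaf v b)) ∧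
    andLeaf s (v, b))

lemma stirling_eq_zero_aux : ∀ {n k : ℕ}, n < k → stirling n k = 0
  | 0, k + 1, _ => rfl
  | n + 1, k + 1, h => by
    simp [stirling, stirling_eq_zero_aux (by omega : n < k + 1),
      stirling_eq_zero_aux (by omega : n < k)]

lemma stirling_key_identity : ∀ (n x : ℕ),
    ∑ k ∈ Finset.range (n + 1), x.choose k * (k.factorial * stirling n k) = x ^ n
  | 0, x => by simp [stirling]
  | n + 1, x => by
    have h0 : stirling (n + 1) 0 = 0 := rfl
    rw [Finset.sum_range_succ']
    have step : ∀ j, x.choose (j+1) * ((j+1).factorial * stirling (n+1) (j+1))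
        = x.choose (j+1) * (j+1).factorial * (j+1) * stirling n (j+1)
          + x.choose j * (j.factorial * ((x - j) * stirling n j)) := by
      intro j
      have h2 : x.choose (j+1) * (j+1).factorial = x.choose j * j.factorial * (x - j) := by
        rw [Nat.factorial_succ, ← mul_assoc, Nat.choose_succ_right_eq]; ring
      show x.choose (j+1) * ((j+1).factorial * ((j+1) * stirling n (j+1) + stirling n j)) = _
      rw [← mul_assoc, h2]; ring
    simp only [step, Finset.sum_add_distrib, h0, Nat.mul_zero, Nat.add_zero]
    have h1 : ∑ j ∈ Finset.range (n+1),
        x.choose (j+1) * (j+1).factorial * (j+1) * stirling n (j+1)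
        = ∑ k ∈ Finset.range (n+1), x.choose k * k.factorial * k * stirling n k := by
      rw [Finset.sum_range_succ, stirling_eq_zero_aux (Nat.lt_succ_self n), Nat.mul_zero]
      conv_rhs => rw [Finset.sum_range_succ']
      simp
    rw [h1, ← Finset.sum_add_distrib]
    have h2 : ∀ k ∈ Finset.range (n+1),
        x.choose k * k.factorial * k * stirling n k
          + x.choose k * (k.factorial * ((x - k) * stirling n k))
        = x * (x.choose k * (k.factorial * stirling n k)) := by
      intro k _
      rcases le_or_gt k x with h | h
      · have hx : k + (x - k) = x := by omega
        set c := x.choose k with hc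
        conv_rhs => rw [← hx]
        ring
      · simp [Nat.choose_eq_zero_of_lt h]
    rw [Finset.sum_congr rfl h2, ← Finset.mul_sum, stirling_key_identity n x, pow_succ]
    ring

lemma stirling_upper_nat (n p : ℕ) (hpn : p ≤ n) :
    p.factorial * stirling n p ≤ p ^ n := by
  have hkey := stirling_key_identity n p
  have hmem : p ∈ Finset.range (n + 1) := Finset.mem_range.mpr (by omega)
  calc p.factorial * stirling n p
      = p.choose p * (p.factorial * stirling n p) := by simp
    _ ≤ ∑ k ∈ Finset.range (n + 1), p.choose k * (k.factorial * stirling n k) :=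
        Finset.single_le_sum (f := fun k => p.choose k * (k.factorial * stirling n k))
          (fun k _ => Nat.zero_le _) hmem
    _ = p ^ n := hkey

lemma stirling_lower_nat (n q : ℕ) (hpn : q + 1 ≤ n) :
    (q + 1) ^ n ≤ (q + 1).factorial * stirling n (q + 1) + (q + 1) * q ^ n := by
  have hkey := stirling_key_identity n (q + 1)
  have hkey' := stirling_key_identity n q
  have hmem : q + 1 ∈ Finset.range (n + 1) := Finset.mem_range.mpr (by omega)
  rw [← Finset.add_sum_erase _ _ hmem, Nat.choose_self, Nat.one_mul] at hkey
  have hrest : ∑ k ∈ (Finset.range (n + 1)).erase (q + 1),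
      (q + 1).choose k * (k.factorial * stirling n k) ≤ (q + 1) * q ^ n := by
    calc ∑ k ∈ (Finset.range (n + 1)).erase (q + 1),
        (q + 1).choose k * (k.factorial * stirling n k)
        ≤ ∑ k ∈ (Finset.range (n + 1)).erase (q + 1),
            (q + 1) * (q.choose k * (k.factorial * stirling n k)) := by
          apply Finset.sum_le_sum
          intro k hk
          have hk' : k ≠ q + 1 := Finset.ne_of_mem_erase hk
          rcases le_or_gt k q with h | h
          · have hc : q.choose k * (q + 1) = (q + 1).choose k * (q + 1 - k) :=
              Nat.choose_mul_succ_eq q k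
            have h1 : (q + 1).choose k ≤ (q + 1) * q.choose k := by
              have : 1 ≤ q + 1 - k := by omega
              nlinarith [hc]
            calc (q + 1).choose k * (k.factorial * stirling n k)
                ≤ (q + 1) * q.choose k * (k.factorial * stirling n k) :=
                  Nat.mul_le_mul_right _ h1
              _ = (q + 1) * (q.choose k * (k.factorial * stirling n k)) := by ring
          · simp [Nat.choose_eq_zero_of_lt (by omega : q + 1 < k)]
      _ ≤ ∑ k ∈ Finset.range (n + 1),
            (q + 1) * (q.choose k * (k.factorial * stirling n k)) :=
          Finset.sum_le_sum_of_subset (Finset.erase_subset _ _)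
      _ = (q + 1) * q ^ n := by rw [← Finset.mul_sum, hkey']
  omega

/-- Bonferroni-type bounds on Stirling numbers of the second kind:
`p^n/p! − (p−1)^n/(p−1)! ≤ S(n,p) ≤ p^n/p!` for `1 ≤ p ≤ n`. -/
theorem stmt_4 (n p : ℕ) (hn : 1 ≤ n) (hp : 1 ≤ p) (hpn : p ≤ n) :
    (p : ℝ) ^ n / (Nat.factorial p : ℝ)
        - ((p - 1 : ℕ) : ℝ) ^ n / (Nat.factorial (p - 1) : ℝ)
      ≤ (stirling n p : ℝ) ∧
    (stirling n p : ℝ) ≤ (p : ℝ) ^ n / (Nat.factorial p : ℝ) := by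
  obtain ⟨q, rfl⟩ : ∃ q, p = q + 1 := ⟨p - 1, by omega⟩
  have hq : (q + 1 - 1 : ℕ) = q := rfl
  have hG : (0 : ℝ) < q.factorial := by exact_mod_cast q.factorial_pos
  have hF : (0 : ℝ) < (q + 1).factorial := by exact_mod_cast (q + 1).factorial_pos
  constructor
  · have h := stirling_lower_nat n q hpn
    have h' : ((q + 1 : ℕ) : ℝ) ^ n
        ≤ ((q + 1).factorial : ℝ) * stirling n (q + 1) + (q + 1) * (q : ℝ) ^ n := by
      exact_mod_cast h
    have e : ((q : ℝ)) ^ n / (q.factorial : ℝ)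
        = (((q : ℝ) + 1) * (q : ℝ) ^ n) / ((q + 1).factorial : ℝ) := by
      rw [Nat.factorial_succ]
      push_cast
      rw [mul_div_mul_left _ _ (by positivity)]
    rw [hq, e, div_sub_div_same, div_le_iff₀ hF]
    push_cast at h' ⊢
    linarith
  · rw [le_div_iff₀ hF]
    have h := stirling_upper_nat n (q + 1) hpn
    rw [mul_comm] at h
    exact_mod_cast h

end CatalanSat
end

section
/- Fix an integer n ≥ 1 and for 1 ≤ p ≤ n set a_p^{(n)} = p^n/(p!·2^p). Then the finite sequence (a_p^{(n)})_{1≤p≤n} is unimodal in the following strict sense: the sequence of ratios (a_{p+1}^{(n)}/a_p^{(n)})_{1≤p≤n−1} is strictly decreasing, and there exists an integer M_n ∈ {1,…,n} such that p ↦ a_p^{(n)} is strictly increasing on {1,…,M_n} and strictly decreasing on {M_n+1,…,n}. -/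
open Filter

namespace CatalanSat

lemma a_pos (n p : ℕ) (hp : 1 ≤ p) : 0 < a n p := by
  have hp0 : (0:ℝ) < (p:ℝ) := by exact_mod_cast hp
  have hf : (0:ℝ) < (Nat.factorial p : ℝ) := by exact_mod_cast p.factorial_pos
  unfold a
  positivity

lemma ratio_eq (n p : ℕ) (hp : 1 ≤ p) :
    a n (p + 1) / a n p = (((p:ℝ)+1)/p)^n / (2*((p:ℝ)+1)) := by
  have hp0 : (p:ℝ) ≠ 0 := Nat.cast_ne_zero.mpr (by omega)
  have hf : (Nat.factorial p : ℝ) ≠ 0 := Nat.cast_ne_zero.mpr p.factorial_ne_zero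
  have hp1 : (p:ℝ) + 1 ≠ 0 := by positivity
  unfold a
  rw [Nat.factorial_succ]
  push_cast
  rw [div_pow]
  field_simp
  ring

lemma ratio_anti (n : ℕ) (hn : 1 ≤ n) {p q : ℕ} (hp : 1 ≤ p) (hpq : p < q) :
    (((q:ℝ)+1)/q)^n / (2*((q:ℝ)+1)) < (((p:ℝ)+1)/p)^n / (2*((p:ℝ)+1)) := by
  have hP : (0:ℝ) < p := by exact_mod_cast hp
  have hQ : (0:ℝ) < q := by exact_mod_cast (by omega : 0 < q)
  have hPQ : (p:ℝ) < q := by exact_mod_cast hpq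
  have h1 : ((q:ℝ)+1)/q < ((p:ℝ)+1)/p := by
    rw [div_lt_div_iff₀ hQ hP]; nlinarith
  have h2 : (((q:ℝ)+1)/q)^n < (((p:ℝ)+1)/p)^n :=
    pow_lt_pow_left₀ h1 (by positivity) (by omega)
  gcongr

lemma chain_lt {f : ℕ → ℝ} :
    ∀ q p, p < q → (∀ k, p ≤ k → k < q → f k < f (k+1)) → f p < f q := by
  intro q
  induction q with
  | zero => omega
  | succ q ih =>
    intro p hpq step
    rcases eq_or_lt_of_le (Nat.lt_succ_iff.mp hpq) with h | h
    · subst h; exact step p le_rfl (Nat.lt_succ_self p)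
    · exact (ih p h (fun k hk hk' => step k hk (by omega))).trans
        (step q (by omega) (Nat.lt_succ_self q))

/-- for fixed `n ≥ 1` the sequence `a_p = p^n/(p!·2^p)` is
strictly unimodal on `{1,…,n}`: its consecutive ratios are strictly
decreasing, and there is `M_n ∈ {1,…,n}` such that it is strictly increasing
on `{1,…,M_n}` and strictly decreasing on `{M_n+1,…,n}`. -/
theorem stmt_5 (n : ℕ) (hn : 1 ≤ n) :
    (∀ p q : ℕ, 1 ≤ p → p < q → q + 1 ≤ n →
      a n (q + 1) / a n q < a n (p + 1) / a n p) ∧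
    ∃ M : ℕ, M ∈ Finset.Icc 1 n ∧
      (∀ p q : ℕ, 1 ≤ p → p < q → q ≤ M → a n p < a n q) ∧
      (∀ p q : ℕ, M + 1 ≤ p → p < q → q ≤ n → a n q < a n p) := by
  classical
  constructor
  · intro p q hp hpq _
    rw [ratio_eq n p hp, ratio_eq n q (by omega)]
    exact ratio_anti n hn hp hpq
  · by_cases h : ∃ m, (1 ≤ m ∧ m ≤ n - 1 ∧ a n (m + 1) ≤ a n m)
    · set M := Nat.find h with hM
      obtain ⟨hM1, hMn, hMle⟩ := Nat.find_spec h
      refine ⟨M, Finset.mem_Icc.mpr ⟨hM1, by omega⟩, ?_, ?_⟩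
      · intro p q hp hpq hqM
        refine chain_lt q p hpq (fun k hk hk' => ?_)
        have hkM : k < M := by omega
        have := Nat.find_min h hkM
        push_neg at this
        exact this (by omega) (by omega)
      · intro p q hp hpq hqn
        have key := chain_lt (f := fun k => -(a n k)) q p hpq (fun k hk hk' => ?_)
        · simpa using key
        simp only [neg_lt_neg_iff]
        have hk1 : 1 ≤ k := by omega
        have hak : 0 < a n k := a_pos n k hk1
        have hrM : (((M:ℝ)+1)/M)^n / (2*((M:ℝ)+1)) ≤ 1 := by
          rw [← ratio_eq n M hM1]
          exact div_le_one_of_le₀ hMle (a_pos n M hM1).le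
        have hlt : a n (k + 1) / a n k < 1 := by
          rw [ratio_eq n k hk1]
          exact lt_of_lt_of_le (ratio_anti n hn hM1 (by omega)) hrM
        exact (div_lt_one hak).mp hlt
    · push_neg at h
      refine ⟨n, Finset.mem_Icc.mpr ⟨hn, le_rfl⟩, ?_, ?_⟩
      · intro p q hp hpq hqn
        refine chain_lt q p hpq (fun k hk hk' => ?_)
        exact h k (by omega) (by omega)
      · intro p q hp hpq hqn
        omega

end CatalanSat
end
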